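/- With b = −(1/3)F_{z''} and 2a = −F_{z'} − (2/9)(F_{z''})² + (1/3)D(F_{z''}), the Wünschmann expression U[F] = F_z − aF_{z''} + D(a) − ab satisfies: if U[F] = 0 identically, then L_D g = (2/3)F_{z''} · g, i.e., D is a conformal Killing vector field of the degenerate metric g = ω¹⊗ω³ + ω³⊗ω¹ − ω²⊗ω² on (z,z',z'',s)-space. -/

import Mathlib

noncomputable section

/-- Points of ℝ⁴ with coordinates (z, z', z'', s) = (x 0, x 1, x 2, x 3). -/
abbrev Pt := Fin 4 → ℝ

/-- Partial derivative of a scalar function in the i-th coordinate direction. -/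
def pd (i : Fin 4) (f : Pt → ℝ) (x : Pt) : ℝ := fderiv ℝ f x (Pi.single i 1)

/-- A one-form, given by its covariant components. -/
abbrev Form1 := Pt → Fin 4 → ℝ

/-- β¹ = dz - z' ds -/
def beta1 : Form1 := fun x => ![1, 0, 0, -x 1]
/-- β² = dz' - z'' ds -/
def beta2 : Form1 := fun x => ![0, 1, 0, -x 2]
/-- β³ = dz'' - F ds -/
def beta3 (F : Pt → ℝ) : Form1 := fun x => ![0, 0, 1, -F x]
/-- the one-form ds -/
def dsf : Form1 := fun _ => ![0, 0, 0, 1]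

/-- The total-derivative vector field D = ∂_s + z'∂_z + z''∂_{z'} + F∂_{z''}. -/
def Dvec (F : Pt → ℝ) : Pt → Fin 4 → ℝ := fun x => ![x 1, x 2, F x, 1]

/-- Action of the vector field D on scalar functions (the total s-derivative). -/
def Dop (F : Pt → ℝ) (f : Pt → ℝ) (x : Pt) : ℝ := ∑ j, Dvec F x j * pd j f x

/-- Lie derivative of a one-form along a vector field X:
`(L_X ω)_i = X^j ∂_j ω_i + ω_j ∂_i X^j`. -/
def lie1 (X : Pt → Fin 4 → ℝ) (ω : Form1) : Form1 :=
  fun x i => (∑ j, X x j * pd j (fun y => ω y i) x) + ∑ j, ω x j * pd i (fun y => X y j) x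

/-- Lie derivative of a covariant 2-tensor along a vector field X. -/
def lie2 (X : Pt → Fin 4 → ℝ) (g : Pt → Fin 4 → Fin 4 → ℝ) :
    Pt → Fin 4 → Fin 4 → ℝ :=
  fun x i j => (∑ k, X x k * pd k (fun y => g y i j) x)
    + (∑ k, g x k j * pd i (fun y => X y k) x)
    + ∑ k, g x i k * pd j (fun y => X y k) x

/-- ω¹ = β¹ -/
def omega1 : Form1 := beta1
/-- ω² = β² -/
def omega2 : Form1 := beta2
/-- ω³ = β³ + aβ¹ + bβ² -/
def omega3 (F a b : Pt → ℝ) : Form1 :=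
  fun x i => beta3 F x i + a x * beta1 x i + b x * beta2 x i

/-- U = F_z - aF_{z''} + D(a) - ab -/
def Ufun (F a b : Pt → ℝ) (x : Pt) : ℝ :=
  pd 0 F x - a x * pd 2 F x + Dop F a x - a x * b x
/-- V = F_{z'} - bF_{z''} + a + D(b) - b² -/
def Vfun (F a b : Pt → ℝ) (x : Pt) : ℝ :=
  pd 1 F x - b x * pd 2 F x + a x + Dop F b x - (b x) ^ 2
/-- W = F_{z''} + b -/
def Wfun (F b : Pt → ℝ) (x : Pt) : ℝ := pd 2 F x + b x

/-- g = ω¹⊗ω³ + ω³⊗ω¹ - ω²⊗ω² -/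
def g3 (F a b : Pt → ℝ) : Pt → Fin 4 → Fin 4 → ℝ :=
  fun x i j => omega1 x i * omega3 F a b x j + omega3 F a b x i * omega1 x j
    - omega2 x i * omega2 x j

lemma pd_add {f g : Pt → ℝ} {x : Pt} (hf : DifferentiableAt ℝ f x) (hg : DifferentiableAt ℝ g x) (i : Fin 4) :
    pd i (fun y => f y + g y) x = pd i f x + pd i g x := by
  unfold pd; rw [fderiv_fun_add hf hg]; rfl

lemma pd_mul {f g : Pt → ℝ} {x : Pt} (hf : DifferentiableAt ℝ f x) (hg : DifferentiableAt ℝ g x) (i : Fin 4) :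
    pd i (fun y => f y * g y) x = pd i f x * g x + f x * pd i g x := by
  unfold pd; rw [fderiv_fun_mul hf hg]; simp; ring

lemma pd_const (c : ℝ) (i : Fin 4) (x : Pt) : pd i (fun _ => c) x = 0 := by
  unfold pd; simp

lemma pd_neg {f : Pt → ℝ} {x : Pt} (i : Fin 4) :
    pd i (fun y => -f y) x = -pd i f x := by
  unfold pd; rw [fderiv_fun_neg]; rfl

lemma pd_coord (m i : Fin 4) (x : Pt) : pd i (fun y => y m) x = if m = i then 1 else 0 := by
  unfold pd
  have : (fun y : Pt => y m) = ⇑(ContinuousLinearMap.proj (R := ℝ) (φ := fun _ : Fin 4 => ℝ) m) := rfl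
  rw [this, ContinuousLinearMap.fderiv]
  simp [Pi.single_apply]

lemma contDiff_pd {f : Pt → ℝ} (hf : ContDiff ℝ (⊤ : ℕ∞) f) (i : Fin 4) : ContDiff ℝ (⊤ : ℕ∞) (pd i f) := by
  have h1 : ContDiff ℝ (⊤ : ℕ∞) (fderiv ℝ f) := hf.fderiv_right (by simp)
  exact (ContinuousLinearMap.apply ℝ ℝ (Pi.single i 1)).contDiff.comp h1

variable {F a b : Pt → ℝ}

lemma lie1_beta1 (hF : ContDiff ℝ (⊤ : ℕ∞) F) (x : Pt) (i : Fin 4) :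
    lie1 (Dvec F) beta1 x i = beta2 x i := by
  have hFd := hF.differentiable (by simp)
  unfold lie1 beta1 beta2 Dvec
  fin_cases i <;>
    simp [Fin.sum_univ_four, pd_const, pd_coord, pd_neg]

lemma lie1_beta2 (hF : ContDiff ℝ (⊤ : ℕ∞) F) (x : Pt) (i : Fin 4) :
    lie1 (Dvec F) beta2 x i = beta3 F x i := by
  have hFd := hF.differentiable (by simp)
  unfold lie1 beta2 beta3 Dvec
  fin_cases i <;>
    simp [Fin.sum_univ_four, pd_const, pd_coord, pd_neg]

lemma lie1_beta3 (hF : ContDiff ℝ (⊤ : ℕ∞) F) (x : Pt) (i : Fin 4) :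
    lie1 (Dvec F) (beta3 F) x i
      = pd 0 F x * beta1 x i + pd 1 F x * beta2 x i + pd 2 F x * beta3 F x i := by
  have hFd := hF.differentiable (by simp)
  unfold lie1 beta1 beta2 beta3 Dvec
  fin_cases i <;>
    simp [Fin.sum_univ_four, pd_const, pd_coord, pd_neg] <;> ring

lemma pd_sub {f g : Pt → ℝ} {x : Pt} (hf : DifferentiableAt ℝ f x) (hg : DifferentiableAt ℝ g x) (i : Fin 4) :
    pd i (fun y => f y - g y) x = pd i f x - pd i g x := by
  unfold pd; rw [fderiv_fun_sub hf hg]; rfl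

lemma diff_coord (m : Fin 4) : Differentiable ℝ (fun y : Pt => y m) :=
  (ContinuousLinearMap.proj (R := ℝ) (φ := fun _ : Fin 4 => ℝ) m).differentiable

lemma diff_beta1 (i : Fin 4) : Differentiable ℝ (fun y => beta1 y i) := by
  fin_cases i <;> simp [beta1] <;>
    first
      | exact differentiable_const _
      | exact diff_coord 1

lemma diff_beta2 (i : Fin 4) : Differentiable ℝ (fun y => beta2 y i) := by
  fin_cases i <;> simp [beta2] <;>
    first
      | exact differentiable_const _
      | exact diff_coord 2

lemma diff_beta3 (hF : ContDiff ℝ (⊤ : ℕ∞) F) (i : Fin 4) :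
    Differentiable ℝ (fun y => beta3 F y i) := by
  fin_cases i <;> simp [beta3] <;>
    first
      | exact differentiable_const _
      | exact hF.differentiable (by simp)

lemma diff_omega3 (hF : ContDiff ℝ (⊤ : ℕ∞) F) (ha : Differentiable ℝ a) (hb : Differentiable ℝ b)
    (i : Fin 4) : Differentiable ℝ (fun y => omega3 F a b y i) := by
  unfold omega3
  exact ((diff_beta3 hF i).add (ha.mul (diff_beta1 i))).add (hb.mul (diff_beta2 i))

lemma lie1_add (X : Pt → Fin 4 → ℝ) (ω η : Form1)
    (hω : ∀ i, Differentiable ℝ (fun y => ω y i)) (hη : ∀ i, Differentiable ℝ (fun y => η y i))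
    (x : Pt) (i : Fin 4) :
    lie1 X (fun y k => ω y k + η y k) x i = lie1 X ω x i + lie1 X η x i := by
  unfold lie1
  simp only [pd_add ((hω i) x) ((hη i) x)]
  simp [Fin.sum_univ_four]; ring

lemma lie1_smul (X : Pt → Fin 4 → ℝ) (f : Pt → ℝ) (ω : Form1)
    (hf : Differentiable ℝ f) (hω : ∀ i, Differentiable ℝ (fun y => ω y i))
    (x : Pt) (i : Fin 4) :
    lie1 X (fun y k => f y * ω y k) x i
      = (∑ j, X x j * pd j f x) * ω x i + f x * lie1 X ω x i := by
  unfold lie1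
  simp only [pd_mul (hf x) ((hω i) x)]
  simp [Fin.sum_univ_four]; ring

lemma pd_const_mul {f : Pt → ℝ} {x : Pt} (hf : DifferentiableAt ℝ f x) (c : ℝ) (i : Fin 4) :
    pd i (fun y => c * f y) x = c * pd i f x := by
  unfold pd; rw [fderiv_const_mul hf]; rfl

lemma lie1_omega3 (hF : ContDiff ℝ (⊤ : ℕ∞) F) (ha : Differentiable ℝ a) (hb : Differentiable ℝ b)
    (x : Pt) (i : Fin 4) :
    lie1 (Dvec F) (omega3 F a b) x i
      = (pd 0 F x + Dop F a x) * beta1 x i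
        + (pd 1 F x + a x + Dop F b x) * beta2 x i
        + (pd 2 F x + b x) * beta3 F x i := by
  have h1 : lie1 (Dvec F) (omega3 F a b) x i
      = lie1 (Dvec F) (fun y k => beta3 F y k + a y * beta1 y k) x i
        + lie1 (Dvec F) (fun y k => b y * beta2 y k) x i := by
    have := lie1_add (Dvec F) (fun y k => beta3 F y k + a y * beta1 y k)
      (fun y k => b y * beta2 y k)
      (fun k => (diff_beta3 hF k).add (ha.mul (diff_beta1 k)))
      (fun k => hb.mul (diff_beta2 k)) x i
    rw [← this]; rfl
  rw [h1,
    lie1_add (Dvec F) (beta3 F) (fun y k => a y * beta1 y k) (diff_beta3 hF)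
      (fun k => ha.mul (diff_beta1 k)) x i,
    lie1_smul (Dvec F) a beta1 ha diff_beta1 x i,
    lie1_smul (Dvec F) b beta2 hb diff_beta2 x i,
    lie1_beta1 hF x i, lie1_beta2 hF x i, lie1_beta3 hF x i]
  show _ = _
  unfold Dop
  ring

lemma lie2_g3 (X : Pt → Fin 4 → ℝ) (hF : ContDiff ℝ (⊤ : ℕ∞) F) (ha : Differentiable ℝ a)
    (hb : Differentiable ℝ b) (x : Pt) (i j : Fin 4) :
    lie2 X (g3 F a b) x i j
      = lie1 X omega1 x i * omega3 F a b x j + omega1 x i * lie1 X (omega3 F a b) x j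
        + (lie1 X (omega3 F a b) x i * omega1 x j + omega3 F a b x i * lie1 X omega1 x j)
        - (lie1 X omega2 x i * omega2 x j + omega2 x i * lie1 X omega2 x j) := by
  have d1 : ∀ k, Differentiable ℝ (fun y => omega1 y k) := diff_beta1
  have d2 : ∀ k, Differentiable ℝ (fun y => omega2 y k) := diff_beta2
  have d3 : ∀ k, Differentiable ℝ (fun y => omega3 F a b y k) := diff_omega3 hF ha hb
  unfold lie2 g3 lie1
  simp only [pd_sub (f := fun y => omega1 y i * omega3 F a b y j + omega3 F a b y i * omega1 y j)
      (g := fun y => omega2 y i * omega2 y j) ((((d1 i).mul (d3 j)).add ((d3 i).mul (d1 j))) x) (((d2 i).mul (d2 j)) x),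
    pd_add (f := fun y => omega1 y i * omega3 F a b y j) (g := fun y => omega3 F a b y i * omega1 y j)
      (((d1 i).mul (d3 j)) x) (((d3 i).mul (d1 j)) x),
    pd_mul ((d1 i) x) ((d3 j) x), pd_mul ((d3 i) x) ((d1 j) x), pd_mul ((d2 i) x) ((d2 j) x)]
  simp [Fin.sum_univ_four]; ring

/-- with b = -(1/3)F_{z''} and
2a = -F_{z'} - (2/9)(F_{z''})² + (1/3)D(F_{z''}), if the Wünschmann expression
U[F] = F_z - aF_{z''} + D(a) - ab vanishes identically then L_D g = (2/3)F_{z''}·g,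
i.e. D is a conformal Killing field of g = ω¹⊗ω³ + ω³⊗ω¹ - ω²⊗ω². -/
theorem stmt4 (F a b : Pt → ℝ) (hF : ContDiff ℝ (⊤ : ℕ∞) F) (ha : ContDiff ℝ (⊤ : ℕ∞) a)
    (hb : ContDiff ℝ (⊤ : ℕ∞) b)
    (hbv : ∀ x, b x = -(1/3) * pd 2 F x)
    (hav : ∀ x, 2 * a x = -pd 1 F x - (2/9) * (pd 2 F x) ^ 2
        + (1/3) * Dop F (fun y => pd 2 F y) x)
    (hU : ∀ x, Ufun F a b x = 0) :
    lie2 (Dvec F) (g3 F a b) = fun x i j => (2/3) * pd 2 F x * g3 F a b x i j := by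
  have had := ha.differentiable (by simp)
  have hbd := hb.differentiable (by simp)
  have hb' : b = fun y => -(1/3) * pd 2 F y := funext hbv
  have hpdF : Differentiable ℝ (fun y => pd 2 F y) := (contDiff_pd hF 2).differentiable (by simp)
  funext x i j
  have hDb : Dop F b x = -(1/3) * Dop F (fun y => pd 2 F y) x := by
    rw [hb']; unfold Dop
    simp only [pd_const_mul (hpdF _) (-(1/3))]
    simp [Fin.sum_univ_four]; ring
  have hP : pd 0 F x + Dop F a x = a x * (pd 2 F x + b x) := by
    have := hU x; unfold Ufun at this; linarith
  have hQ : pd 1 F x + a x + Dop F b x = -a x + b x * (pd 2 F x + b x) := by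
    linear_combination hav x + hDb - (b x + (2/3) * pd 2 F x) * hbv x
  rw [lie2_g3 (Dvec F) hF had hbd x i j]
  have e1 : ∀ k, lie1 (Dvec F) omega1 x k = omega2 x k := lie1_beta1 hF x
  have e2 : ∀ k, lie1 (Dvec F) omega2 x k = beta3 F x k := lie1_beta2 hF x
  rw [e1 i, e1 j, e2 i, e2 j, lie1_omega3 hF had hbd x i, lie1_omega3 hF had hbd x j,
    hP, hQ]
  unfold g3 omega1 omega2 omega3
  rw [hbv x]
  ring
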